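/- Convolution inequalities for step-size products: assume the step sizes β_k = c_{0,β}(k+k_0)^{-b}, γ_k = c_{0,γ}(k+k_0)^{-a} with 1/2 < a < b < 1 satisfy the step-size assumption (A5) (in particular r_step := c_{0,β}/c_{0,γ} ≤ a22/(2aΔ) and the ratio conditions γ_k/γ_{k+1} ≤ 1 + (a22/8)γ_{k+1}, β_k/β_{k+1} ≤ 1 + (aΔ/16)β_{k+1}). Then for all j ≤ k: (i) Σ_{i=j+1}^k γ_j P^{(1)}_{i+1:k} P^{(2)}_{j+1:i-1} ≤ C_γ^P · P^{(1)}_{j+1:k} with C_γ^P := 24/(a22 (1 − c_{0,β} aΔ/2)); and (ii) Σ_{i=j+1}^k β_j P^{(1)}_{i+1:k} P^{(2)}_{j+1:i-1} ≤ C_β^P · γ_j^{(b−a)/a} P^{(1)}_{j+1:k} with C_β^P := 24 c_{0,β}/(a22 c_{0,γ}^{b/a} (1 − c_{0,β} aΔ/2)). -/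

import Mathlib

open Real

noncomputable section

/-- polynomial step size `c₀ (k + k₀)^{-e}`. -/
def stepSize (c₀ k₀ e : ℝ) (k : ℕ) : ℝ := c₀ * ((k : ℝ) + k₀) ^ (-e)

/-!
Write `x_l = a22 γ_l` and `y_l = aΔ β_l`; the bound on `c_{0,β}/c_{0,γ}` gives `y_l ≤ x_l / 2`.
The ratio condition gives `γ_j ≤ γ_i ∏_{l=j+1}^{i} (1 + x_l/8)`, and
`(1 + x/8)(1 - x/2) ≤ (1 - x/8)(1 - y/2)` turns each summand into at most
`(3/2) γ_i F_{i-1} P¹_{j+1:k}` with `F_n = ∏_{l=j+1}^{n} (1 - x_l/8)`. The sum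
`Σ (x_i/8) F_{i-1} = 1 - F_k` telescopes, so the left side of (i) is at most `(12/a22) P¹_{j+1:k}`.
Part (ii) follows because `β_j = c_{0,β} c_{0,γ}^{-b/a} γ_j^{(b-a)/a} γ_j`.
-/

open Finset

theorem Finset.sum_mul_prod_Icc_one_sub {R : Type*} [CommRing R] (z : ℕ → R) (j n : ℕ) :
    ∑ i ∈ Icc (j + 1) n, z i * ∏ l ∈ Icc (j + 1) (i - 1), (1 - z l) =
      1 - ∏ l ∈ Icc (j + 1) n, (1 - z l) := by
  rw [prod_one_sub_ordered, sub_sub_cancel]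
  refine sum_congr rfl fun i hi => ?_
  congr 2
  ext l
  simp only [mem_filter, mem_Icc] at hi ⊢
  omega

theorem le_mul_prod_Icc_of_le_mul_succ {R : Type*} [CommSemiring R] [PartialOrder R]
    [IsOrderedRing R] {g r : ℕ → R} (hr : ∀ l, 0 ≤ r l) (hg : ∀ l, g l ≤ g (l + 1) * r (l + 1))
    {j i : ℕ} (hji : j ≤ i) : g j ≤ g i * ∏ l ∈ Icc (j + 1) i, r l := by
  induction i, hji using Nat.le_induction with
  | base => simp
  | succ i hji ih =>
    calc g j ≤ g i * ∏ l ∈ Icc (j + 1) i, r l := ih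
      _ ≤ g (i + 1) * r (i + 1) * ∏ l ∈ Icc (j + 1) i, r l :=
        mul_le_mul_of_nonneg_right (hg i) (prod_nonneg fun l _ => hr l)
      _ = g (i + 1) * ∏ l ∈ Icc (j + 1) (i + 1), r l := by
        rw [prod_Icc_succ_top (by omega)]; ring

theorem one_add_div_eight_mul_one_sub_div_two_le {x y : ℝ} (hx : 0 ≤ x) (hy0 : 0 ≤ y)
    (hy : y ≤ x / 2) : (1 + x / 8) * (1 - x / 2) ≤ (1 - x / 8) * (1 - y / 2) := by
  nlinarith [mul_nonneg hx hy0, sq_nonneg x]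

section Convolution

variable {c : ℝ} {γ y : ℕ → ℝ}

theorem mul_prod_one_sub_le_three_halves_mul (hc : 0 ≤ c) (hγ : ∀ l, 0 ≤ γ l)
    (hγc : ∀ l, γ l * c ≤ 1) (hy0 : ∀ l, 0 ≤ y l) (hyγ : ∀ l, y l ≤ γ l * c / 2)
    (hratio : ∀ l, γ l ≤ γ (l + 1) * (1 + c / 8 * γ (l + 1))) {j i : ℕ} (hji : j < i) :
    γ j * ∏ l ∈ Icc (j + 1) (i - 1), (1 - γ l * c / 2) ≤
      3 / 2 * γ i * (∏ l ∈ Icc (j + 1) (i - 1), (1 - γ l * c / 8)) *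
        ∏ l ∈ Icc (j + 1) i, (1 - y l / 2) := by
  obtain ⟨m, rfl⟩ : ∃ m, i = m + 1 := ⟨i - 1, by omega⟩
  have hγc0 : ∀ l, 0 ≤ γ l * c := fun l => mul_nonneg (hγ l) hc
  have hchain := le_mul_prod_Icc_of_le_mul_succ (r := fun l => 1 + c / 8 * γ l)
    (fun l => by have := hγ l; positivity) hratio hji.le
  rw [prod_Icc_succ_top (by omega)] at hchain
  rw [Nat.add_sub_cancel, prod_Icc_succ_top (by omega : j + 1 ≤ m + 1)]
  calc γ j * ∏ l ∈ Icc (j + 1) m, (1 - γ l * c / 2)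
      ≤ γ (m + 1) * ((∏ l ∈ Icc (j + 1) m, (1 + c / 8 * γ l)) * (1 + c / 8 * γ (m + 1))) *
          ∏ l ∈ Icc (j + 1) m, (1 - γ l * c / 2) :=
        mul_le_mul_of_nonneg_right hchain
          (prod_nonneg fun l _ => by linarith [hγc l])
    _ = γ (m + 1) * (1 + γ (m + 1) * c / 8) *
          ∏ l ∈ Icc (j + 1) m, ((1 + γ l * c / 8) * (1 - γ l * c / 2)) := by
        rw [prod_mul_distrib]; ring_nf
    _ ≤ γ (m + 1) * (3 / 2 * (1 - y (m + 1) / 2)) *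
          ∏ l ∈ Icc (j + 1) m, ((1 - γ l * c / 8) * (1 - y l / 2)) := by
        have hfactor : ∀ l ∈ Icc (j + 1) m, (1 + γ l * c / 8) * (1 - γ l * c / 2) ≤
            (1 - γ l * c / 8) * (1 - y l / 2) :=
          fun l _ => one_add_div_eight_mul_one_sub_div_two_le (hγc0 l) (hy0 l) (hyγ l)
        have hnonneg : ∀ l, 0 ≤ (1 + γ l * c / 8) * (1 - γ l * c / 2) := fun l =>
          mul_nonneg (by linarith [hγc0 l]) (by linarith [hγc l])
        have hlast : 1 + γ (m + 1) * c / 8 ≤ 3 / 2 * (1 - y (m + 1) / 2) := by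
          linarith [hγc (m + 1), hyγ (m + 1)]
        exact mul_le_mul (mul_le_mul_of_nonneg_left hlast (hγ _))
          (prod_le_prod (fun l _ => hnonneg l) hfactor) (prod_nonneg fun l _ => hnonneg l)
          (mul_nonneg (hγ _) (by linarith [hγc (m + 1), hyγ (m + 1)]))
    _ = _ := by rw [prod_mul_distrib]; ring

theorem sum_mul_prod_le_div_mul_prod (hc : 0 < c) (hγ : ∀ l, 0 ≤ γ l)
    (hγc : ∀ l, γ l * c ≤ 1) (hy0 : ∀ l, 0 ≤ y l) (hyγ : ∀ l, y l ≤ γ l * c / 2)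
    (hratio : ∀ l, γ l ≤ γ (l + 1) * (1 + c / 8 * γ (l + 1))) (j k : ℕ) :
    ∑ i ∈ Icc (j + 1) k,
        γ j * (∏ l ∈ Icc (i + 1) k, (1 - y l / 2)) * ∏ l ∈ Icc (j + 1) (i - 1), (1 - γ l * c / 2)
      ≤ 12 / c * ∏ l ∈ Icc (j + 1) k, (1 - y l / 2) := by
  set Y := ∏ l ∈ Icc (j + 1) k, (1 - y l / 2)
  set F := fun n => ∏ l ∈ Icc (j + 1) n, (1 - γ l * c / 8)
  have hY : 0 ≤ Y := prod_nonneg fun l _ => by linarith [hyγ l, hγc l]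
  have hF : 0 ≤ F k := prod_nonneg fun l _ => by linarith [hγc l]
  have hsplit : ∀ i ∈ Icc (j + 1) k,
      (∏ l ∈ Icc (j + 1) i, (1 - y l / 2)) * ∏ l ∈ Icc (i + 1) k, (1 - y l / 2) = Y := by
    intro i hi
    rw [mem_Icc] at hi
    simp only [Y, Icc_add_one_left_eq_Ioc]
    exact prod_Ioc_consecutive _ (by omega) hi.2
  calc _ ≤ ∑ i ∈ Icc (j + 1) k, 3 / 2 * γ i * F (i - 1) * Y := by
        refine sum_le_sum fun i hi => ?_
        rw [← hsplit i hi]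
        have hpoint := mul_prod_one_sub_le_three_halves_mul hc.le hγ hγc hy0 hyγ hratio
          (j := j) (i := i) (by rw [mem_Icc] at hi; omega)
        have hnonneg : 0 ≤ ∏ l ∈ Icc (i + 1) k, (1 - y l / 2) :=
          prod_nonneg fun l _ => by linarith [hyγ l, hγc l]
        have := mul_le_mul_of_nonneg_right hpoint hnonneg
        simp only [F]
        linarith
    _ = 12 / c * (∑ i ∈ Icc (j + 1) k, γ i * c / 8 * F (i - 1)) * Y := by
        rw [mul_sum, sum_mul]
        refine sum_congr rfl fun i _ => ?_
        field_simp
        ring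
    _ = 12 / c * (1 - F k) * Y := by rw [sum_mul_prod_Icc_one_sub]
    _ ≤ 12 / c * Y :=
        mul_le_mul_of_nonneg_right (mul_le_of_le_one_right (by positivity) (by linarith)) hY

end Convolution

theorem stepSize_pos {c₀ k₀ : ℝ} (hc₀ : 0 < c₀) (hk₀ : 0 < k₀) (e : ℝ) (k : ℕ) :
    0 < stepSize c₀ k₀ e k :=
  mul_pos hc₀ (rpow_pos_of_pos (by positivity) _)

theorem stepSize_le {c₀ k₀ e : ℝ} (hc₀ : 0 ≤ c₀) (hk₀ : 1 ≤ k₀) (he : 0 ≤ e) (k : ℕ) :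
    stepSize c₀ k₀ e k ≤ c₀ :=
  mul_le_of_le_one_right hc₀
    (rpow_le_one_of_one_le_of_nonpos (by linarith [(k.cast_nonneg : (0 : ℝ) ≤ k)]) (by linarith))

theorem stepSize_le_div_mul_stepSize {c₀ c₁ k₀ e e' : ℝ} (hc₀ : 0 ≤ c₀) (hc₁ : 0 < c₁)
    (hk₀ : 1 ≤ k₀) (he : e ≤ e') (k : ℕ) :
    stepSize c₀ k₀ e' k ≤ c₀ / c₁ * stepSize c₁ k₀ e k := by
  have hpow : ((k : ℝ) + k₀) ^ (-e') ≤ ((k : ℝ) + k₀) ^ (-e) :=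
    rpow_le_rpow_of_exponent_le (by linarith [(k.cast_nonneg : (0 : ℝ) ≤ k)]) (by linarith)
  calc stepSize c₀ k₀ e' k ≤ c₀ * ((k : ℝ) + k₀) ^ (-e) := mul_le_mul_of_nonneg_left hpow hc₀
    _ = c₀ / c₁ * stepSize c₁ k₀ e k := by unfold stepSize; field_simp

theorem stepSize_mul_le_stepSize_mul_div_two {c₀ c₁ k₀ e e' A B : ℝ} (hc₀ : 0 ≤ c₀)
    (hc₁ : 0 < c₁) (hk₀ : 1 ≤ k₀) (he : e ≤ e') (hA : 0 < A) (hratio : c₀ / c₁ ≤ B / (2 * A))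
    (k : ℕ) : stepSize c₀ k₀ e' k * A ≤ stepSize c₁ k₀ e k * B / 2 := by
  have hpos : 0 ≤ stepSize c₁ k₀ e k := (stepSize_pos hc₁ (by linarith) e k).le
  calc stepSize c₀ k₀ e' k * A ≤ c₀ / c₁ * stepSize c₁ k₀ e k * A := by
        gcongr; exact stepSize_le_div_mul_stepSize hc₀ hc₁ hk₀ he k
    _ ≤ B / (2 * A) * stepSize c₁ k₀ e k * A := by gcongr
    _ = stepSize c₁ k₀ e k * B / 2 := by field_simp

theorem stepSize_rpow {c₀ k₀ : ℝ} (hc₀ : 0 ≤ c₀) (hk₀ : 0 ≤ k₀) (e p : ℝ) (k : ℕ) :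
    stepSize c₀ k₀ e k ^ p = stepSize (c₀ ^ p) k₀ (e * p) k := by
  have hbase : (0 : ℝ) ≤ k + k₀ := by positivity
  rw [stepSize, stepSize, mul_rpow hc₀ (rpow_nonneg hbase _), ← rpow_mul hbase, neg_mul]

theorem stepSize_eq_div_mul_rpow_mul (c₀ : ℝ) {c₁ k₀ a : ℝ} (hc₁ : 0 < c₁) (hk₀ : 0 < k₀)
    (ha : a ≠ 0) (b : ℝ) (k : ℕ) :
    stepSize c₀ k₀ b k =
      c₀ / c₁ ^ (b / a) * stepSize c₁ k₀ a k ^ ((b - a) / a) * stepSize c₁ k₀ a k := by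
  rw [mul_assoc, ← rpow_add_one (stepSize_pos hc₁ hk₀ a k).ne', stepSize_rpow hc₁.le hk₀.le,
    show (b - a) / a + 1 = b / a by field_simp; ring, mul_div_cancel₀ _ ha]
  unfold stepSize
  field_simp

theorem convolution_inequalities_stepsize_products_general
    (aΔ a22 : ℝ) (haΔ : 0 < aΔ) (ha22 : 0 < a22)
    (a b : ℝ) (ha : 1 / 2 < a) (hab : a < b)
    (c0β c0γ k0 : ℝ) (hc0β : 0 < c0β) (hc0γ : 0 < c0γ) (hk0 : 1 ≤ k0)
    (β γ : ℕ → ℝ)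
    (hβ : β = stepSize c0β k0 b) (hγ : γ = stepSize c0γ k0 a)
    -- (A5): smallness of the step sizes and of the step-size ratio
    (hsmallβ : c0β * aΔ ≤ 1) (hsmallγ : c0γ * a22 ≤ 1)
    (hratio : c0β / c0γ ≤ a22 / (2 * aΔ))
    (hγratio : ∀ k : ℕ, γ k / γ (k + 1) ≤ 1 + (a22 / 8) * γ (k + 1))
    (P1 P2 : ℕ → ℕ → ℝ)
    (hP1 : ∀ m n, P1 m n = ∏ i ∈ Finset.Icc m n, (1 - β i * aΔ / 2))
    (hP2 : ∀ m n, P2 m n = ∏ i ∈ Finset.Icc m n, (1 - γ i * a22 / 2)) :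
    ∀ j k : ℕ, j ≤ k →
      ((∑ i ∈ Finset.Icc (j + 1) k, γ j * P1 (i + 1) k * P2 (j + 1) (i - 1)) ≤
          (24 / (a22 * (1 - c0β * aΔ / 2))) * P1 (j + 1) k) ∧
      ((∑ i ∈ Finset.Icc (j + 1) k, β j * P1 (i + 1) k * P2 (j + 1) (i - 1)) ≤
          (24 * c0β / (a22 * c0γ ^ (b / a) * (1 - c0β * aΔ / 2))) *
            (γ j) ^ ((b - a) / a) * P1 (j + 1) k) := by
  intro j k _
  have ha0 : 0 < a := by linarith
  have hγpos : ∀ l, 0 < γ l := fun l => hγ ▸ stepSize_pos hc0γ (by linarith) a l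
  have hγc : ∀ l, γ l * a22 ≤ 1 := fun l =>
    (mul_le_mul_of_nonneg_right (hγ ▸ stepSize_le hc0γ.le hk0 ha0.le l) ha22.le).trans hsmallγ
  have hβγ : ∀ l, β l * aΔ ≤ γ l * a22 / 2 := fun l =>
    hβ ▸ hγ ▸ stepSize_mul_le_stepSize_mul_div_two hc0β.le hc0γ hk0 hab.le haΔ hratio l
  have hβ0 : ∀ l, 0 ≤ β l * aΔ := fun l =>
    mul_nonneg (hβ ▸ stepSize_pos hc0β (by linarith) b l).le haΔ.le
  have hγstep : ∀ l, γ l ≤ γ (l + 1) * (1 + a22 / 8 * γ (l + 1)) := fun l => by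
    rw [← div_le_iff₀' (hγpos _)]; exact hγratio l
  have hconst : 12 / a22 ≤ 24 / (a22 * (1 - c0β * aΔ / 2)) := by
    rw [div_le_div_iff₀ ha22 (mul_pos ha22 (by linarith))]
    nlinarith [mul_pos hc0β haΔ]
  have hP1nonneg : 0 ≤ P1 (j + 1) k := hP1 _ _ ▸ prod_nonneg fun l _ => by linarith [hβγ l, hγc l]
  have hi : ∑ i ∈ Icc (j + 1) k, γ j * P1 (i + 1) k * P2 (j + 1) (i - 1) ≤
      24 / (a22 * (1 - c0β * aΔ / 2)) * P1 (j + 1) k := by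
    refine le_trans ?_ (mul_le_mul_of_nonneg_right hconst hP1nonneg)
    simp only [hP1, hP2]
    exact sum_mul_prod_le_div_mul_prod ha22 (fun l => (hγpos l).le) hγc hβ0 hβγ hγstep j k
  have hβj : β j = c0β / c0γ ^ (b / a) * γ j ^ ((b - a) / a) * γ j := by
    rw [hβ, hγ]; exact stepSize_eq_div_mul_rpow_mul c0β hc0γ (by linarith) ha0.ne' b j
  refine ⟨hi, ?_⟩
  calc _ = c0β / c0γ ^ (b / a) * γ j ^ ((b - a) / a) *
        ∑ i ∈ Icc (j + 1) k, γ j * P1 (i + 1) k * P2 (j + 1) (i - 1) := by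
        rw [mul_sum, hβj]; exact sum_congr rfl fun i _ => by ring
    _ ≤ c0β / c0γ ^ (b / a) * γ j ^ ((b - a) / a) *
        (24 / (a22 * (1 - c0β * aΔ / 2)) * P1 (j + 1) k) :=
        mul_le_mul_of_nonneg_left hi (mul_nonneg (by positivity) (rpow_nonneg (hγpos j).le _))
    _ = _ := by field_simp

/-- **Convolution inequalities for step-size products.**
Under the step-size assumption (A5), with `P¹_{m:n} = ∏_{i=m}^n (1 − β_i aΔ/2)` and
`P²_{m:n} = ∏_{i=m}^n (1 − γ_i a22/2)`:
(i)  `Σ_{i=j+1}^k γ_j P¹_{i+1:k} P²_{j+1:i−1} ≤ C_γ^P P¹_{j+1:k}` and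
(ii) `Σ_{i=j+1}^k β_j P¹_{i+1:k} P²_{j+1:i−1} ≤ C_β^P γ_j^{(b−a)/a} P¹_{j+1:k}`. -/
theorem convolution_inequalities_stepsize_products
    (aΔ a22 : ℝ) (haΔ : 0 < aΔ) (ha22 : 0 < a22)
    (a b : ℝ) (ha : 1 / 2 < a) (hab : a < b) (hb : b < 1)
    (c0β c0γ k0 : ℝ) (hc0β : 0 < c0β) (hc0γ : 0 < c0γ) (hk0 : 1 ≤ k0)
    (β γ : ℕ → ℝ)
    (hβ : β = stepSize c0β k0 b) (hγ : γ = stepSize c0γ k0 a)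
    -- (A5): smallness of the step sizes and of the step-size ratio
    (hsmallβ : c0β * aΔ ≤ 1) (hsmallγ : c0γ * a22 ≤ 1)
    (hratio : c0β / c0γ ≤ a22 / (2 * aΔ))
    (hγratio : ∀ k : ℕ, γ k / γ (k + 1) ≤ 1 + (a22 / 8) * γ (k + 1))
    (hβratio : ∀ k : ℕ, β k / β (k + 1) ≤ 1 + (aΔ / 16) * β (k + 1))
    (hγβratio : ∀ k : ℕ, γ k / γ (k + 1) ≤ 1 + (aΔ / 16) * β (k + 1))
    (P1 P2 : ℕ → ℕ → ℝ)
    (hP1 : ∀ m n, P1 m n = ∏ i ∈ Finset.Icc m n, (1 - β i * aΔ / 2))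
    (hP2 : ∀ m n, P2 m n = ∏ i ∈ Finset.Icc m n, (1 - γ i * a22 / 2)) :
    ∀ j k : ℕ, j ≤ k →
      ((∑ i ∈ Finset.Icc (j + 1) k, γ j * P1 (i + 1) k * P2 (j + 1) (i - 1)) ≤
          (24 / (a22 * (1 - c0β * aΔ / 2))) * P1 (j + 1) k) ∧
      ((∑ i ∈ Finset.Icc (j + 1) k, β j * P1 (i + 1) k * P2 (j + 1) (i - 1)) ≤
          (24 * c0β / (a22 * c0γ ^ (b / a) * (1 - c0β * aΔ / 2))) *
            (γ j) ^ ((b - a) / a) * P1 (j + 1) k) :=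
  convolution_inequalities_stepsize_products_general aΔ a22 haΔ ha22 a b ha hab c0β c0γ k0 hc0β hc0γ
    hk0 β γ hβ hγ hsmallβ hsmallγ hratio hγratio P1 P2 hP1 hP2

end
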